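/- arXiv:1701.02075 — 2 statements merged into one kernel-verified Lean document; each statement's English description precedes it below -/
import Mathlib

section
/- Let p be an odd prime, r = p^m, m even with m ≢ 0 (mod p). Then for each B ∈ F_p^*, the number of x ∈ F_r with Tr(x²) = 0 and Tr(x) = B equals p^{m-2} + p^{-1}G_m, while the number of x with Tr(x²) = 0 and Tr(x) = 0 equals p^{m-2}. Here G_m = -(-1)^{(p-1)m/4} p^{m/2} is the quadratic Gauss sum over F_r. -/
/-!
Let `ψ = e ∘ Tr` for a primitive additive character `e` of `𝔽_p`. Detecting both trace
conditions by orthogonality gives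
`p² N_B = ∑_{a,b ∈ 𝔽_p} e(-bB) ∑_{x ∈ F} ψ(a x² + b x)`.
For `a = 0` the inner sum is `q [b = 0]`. For `a ≠ 0`, completing the square turns it into
`ψ(-b²/4a) ∑_x ψ(a x²)`, and since `m` is even every element of `𝔽_p` is a square in `F`, so
`∑_x ψ(a x²) = ∑_x ψ(x²) = G_m`. Now `ψ(-b²/4a) = e(-m b²/4 · a⁻¹)` and `m ≠ 0` in `𝔽_p`, so the
sum over `a ≠ 0` is `p [b = 0] - 1`; the remaining sum over `b` gives
`p² N_B = q + p G_m - p G_m [B = 0]`.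
-/

open Finset

theorem Nat.sub_one_dvd_pow_div_two {q n : ℕ} (hq : Odd q) (hn : Even n) :
    q - 1 ∣ q ^ n / 2 := by
  obtain ⟨j, rfl⟩ := hn
  obtain ⟨c, rfl⟩ := hq
  have hsq : 2 * (2 * c + 1 - 1) ∣ (2 * c + 1) ^ 2 - 1 := by
    refine ⟨c + 1, ?_⟩
    rw [show (2 * c + 1) ^ 2 = 2 * (2 * c) * (c + 1) + 1 by ring, Nat.add_sub_cancel,
      Nat.add_sub_cancel]
  have hpow : 2 * (2 * c + 1 - 1) ∣ (2 * c + 1) ^ (j + j) - 1 := by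
    rw [← two_mul, pow_mul]
    simpa using hsq.trans (Nat.sub_dvd_pow_sub_pow ((2 * c + 1) ^ 2) 1 j)
  have hodd : (2 * c + 1) ^ (j + j) % 2 = 1 := Nat.odd_iff.1 (odd_two_mul_add_one c).pow
  rw [show (2 * c + 1) ^ (j + j) / 2 = ((2 * c + 1) ^ (j + j) - 1) / 2 by omega]
  exact Nat.dvd_div_of_mul_dvd hpow

theorem FiniteField.isSquare_algebraMap_of_even_finrank {k F : Type*} [Field k] [Fintype k]
    [Field F] [Fintype F] [Algebra k F] (hk : ringChar k ≠ 2) (hn : Even (Module.finrank k F))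
    (a : k) : IsSquare (algebraMap k F a) := by
  rcases eq_or_ne a 0 with rfl | ha
  · simp
  have hF : ringChar F ≠ 2 := Algebra.ringChar_eq k F ▸ hk
  rw [FiniteField.isSquare_iff hF ((FaithfulSMul.algebraMap_eq_zero_iff k F).not.2 ha)]
  obtain ⟨t, ht⟩ : Fintype.card k - 1 ∣ Fintype.card F / 2 := by
    rw [Module.card_eq_pow_finrank (K := k) (V := F)]
    exact Nat.sub_one_dvd_pow_div_two (Nat.odd_iff.2 (FiniteField.odd_card_of_char_ne_two hk)) hn
  rw [ht, pow_mul, ← map_pow, FiniteField.pow_card_sub_one_eq_one a ha, map_one, one_pow]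

namespace AddChar

theorem IsPrimitive.ne_one {A R : Type*} [CommRing A] [Nontrivial A] [CommMonoid R]
    {ψ : AddChar A R} (hψ : ψ.IsPrimitive) : ψ ≠ 1 := by
  simpa using hψ one_ne_zero

theorem card_filter_eq_zero_and_eq_zero_mul {X k R : Type*} [Fintype X] [CommRing k]
    [Fintype k] [DecidableEq k] [CommRing R] [IsDomain R] {e : AddChar k R} (he : e.IsPrimitive)
    (f g : X → k) :
    (#{x | f x = 0 ∧ g x = 0} : R) * Fintype.card k ^ 2
      = ∑ x, (∑ a, e (a * f x)) * ∑ b, e (b * g x) := by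
  simp_rw [sum_mulShift _ he, card_eq_sum_ones, Nat.cast_sum, sum_mul, sum_filter]
  refine sum_congr rfl fun x _ ↦ ?_
  by_cases hf : f x = 0 <;> by_cases hg : g x = 0 <;> simp [hf, hg, sq]

section FiniteField

variable {K R : Type*} [Field K] [Fintype K] [CommRing R]

theorem sum_mul_sq_add_mul (hK : ringChar K ≠ 2) (ψ : AddChar K R) {a : K} (ha : a ≠ 0)
    (b : K) : ∑ x, ψ (a * x ^ 2 + b * x) = ψ (-b ^ 2 / (4 * a)) * ∑ x, ψ (a * x ^ 2) := by
  have h2 : (2 : K) ≠ 0 := Ring.two_ne_zero hK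
  have h4 : (4 : K) ≠ 0 := by
    rw [show (4 : K) = 2 * 2 by norm_num]
    exact mul_ne_zero h2 h2
  have complete_square (x : K) :
      a * x ^ 2 + b * x = -b ^ 2 / (4 * a) + a * (x + b / (2 * a)) ^ 2 := by
    field_simp
    ring
  simp_rw [complete_square, map_add_eq_mul, ← mul_sum]
  congr 1
  exact Fintype.sum_equiv (Equiv.addRight _) _ _ fun _ ↦ rfl

theorem sum_mul_sq_of_isSquare (ψ : AddChar K R) {a : K} (ha : a ≠ 0) (hsq : IsSquare a) :
    ∑ x, ψ (a * x ^ 2) = ∑ x, ψ (x ^ 2) := by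
  obtain ⟨s, rfl⟩ := hsq
  have hs : s ≠ 0 := by rintro rfl; simp at ha
  exact Fintype.sum_equiv (Equiv.mulLeft₀ s hs) _ _ fun x ↦ by simp [sq, mul_mul_mul_comm]

variable [DecidableEq K] [IsDomain R]

theorem sum_mul_inv (ψ : AddChar K R) (hψ : ψ.IsPrimitive) (c : K) :
    ∑ a, ψ (c * a⁻¹) = if c = 0 then (Fintype.card K : R) else 0 := by
  rw [← Nat.cast_zero (R := R), ← Nat.cast_ite, ← sum_mulShift c hψ]
  exact Fintype.sum_equiv (Equiv.inv K) _ _ fun a ↦ by simp [mul_comm]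

theorem sum_sq_eq_gaussSum (hK : ringChar K ≠ 2) (ψ : AddChar K R) (hψ : ψ ≠ 1) :
    ∑ x, ψ (x ^ 2) = gaussSum ((quadraticChar K).ringHomComp (Int.castRingHom R)) ψ := by
  have card_sqrts (t : K) : (#{x | x ^ 2 = t} : R) = quadraticChar K t + 1 := by
    have := quadraticChar_card_sqrts hK t
    rw [Set.toFinset_ofPred] at this
    exact_mod_cast congrArg (Int.cast : ℤ → R) this
  calc ∑ x, ψ (x ^ 2) = ∑ t, ∑ x with x ^ 2 = t, ψ t := by
        rw [← sum_fiberwise univ (· ^ 2)]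
        exact sum_congr rfl fun t _ ↦ sum_congr rfl fun x hx ↦ by rw [(mem_filter.1 hx).2]
    _ = ∑ t, (quadraticChar K t + 1 : R) * ψ t := by
        simp_rw [sum_const, nsmul_eq_mul, card_sqrts]
    _ = _ := by
        simp [add_mul, sum_add_distrib, sum_eq_zero_of_ne_one hψ, gaussSum]

end FiniteField

section Trace

variable {k : Type*} [Field k] (F : Type*) [Field F] [Algebra k F] {R : Type*} [CommRing R]

noncomputable def compTrace (e : AddChar k R) : AddChar F R :=
  e.compAddMonoidHom (Algebra.trace k F).toAddMonoidHom

variable {F}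

@[simp]
theorem compTrace_apply (e : AddChar k R) (x : F) :
    e.compTrace F x = e (Algebra.trace k F x) := rfl

theorem compTrace_algebraMap_mul (e : AddChar k R) (c : k) (x : F) :
    e.compTrace F (algebraMap k F c * x) = e (c * Algebra.trace k F x) := by
  rw [compTrace_apply, ← Algebra.smul_def, map_smul, smul_eq_mul]

theorem compTrace_algebraMap (e : AddChar k R) (c : k) :
    e.compTrace F (algebraMap k F c) = e (Module.finrank k F * c) := by
  rw [compTrace_apply, Algebra.trace_algebraMap, nsmul_eq_mul]

theorem isPrimitive_compTrace [Finite F] [IsDomain R] {e : AddChar k R} (he : e ≠ 1) :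
    (e.compTrace F).IsPrimitive := by
  refine IsPrimitive.of_ne_one fun h ↦ he ?_
  refine compAddMonoidHom_injective_left (Algebra.trace k F).toAddMonoidHom
    (Algebra.trace_surjective k F) ?_
  exact h.trans (by ext; simp)

variable [Fintype k] [DecidableEq k] [Fintype F] [IsDomain R] {e : AddChar k R}

theorem sum_sum_compTrace_mul_sq_add_mul (hk : ringChar k ≠ 2)
    (hn : Even (Module.finrank k F)) (hnk : (Module.finrank k F : k) ≠ 0) (he : e.IsPrimitive)
    (b : k) :
    ∑ a : k, ∑ x : F, e.compTrace F (algebraMap k F a * x ^ 2 + algebraMap k F b * x)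
      = (if b = 0 then Fintype.card F + Fintype.card k * ∑ x : F, e.compTrace F (x ^ 2) else 0)
        - ∑ x : F, e.compTrace F (x ^ 2) := by
  set ψ := e.compTrace F
  set G := ∑ x : F, ψ (x ^ 2)
  have hF : ringChar F ≠ 2 := Algebra.ringChar_eq k F ▸ hk
  have hψ : ψ.IsPrimitive := isPrimitive_compTrace he.ne_one
  have h4 : (4 : k) ≠ 0 := by
    rw [show (4 : k) = 2 * 2 by norm_num]
    exact mul_ne_zero (Ring.two_ne_zero hk) (Ring.two_ne_zero hk)
  set c := -(Module.finrank k F * b ^ 2 / 4)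
  have hc : c = 0 ↔ b = 0 := by simp [c, hnk, h4]
  have linear_sum : ∑ x : F, ψ (algebraMap k F 0 * x ^ 2 + algebraMap k F b * x)
      = if b = 0 then (Fintype.card F : R) else 0 := by
    classical
    simp_rw [map_zero, zero_mul, zero_add, mul_comm _ (_ : F)]
    rw [sum_mulShift _ hψ]
    simp
  have quadratic_sum {a : k} (ha : a ≠ 0) :
      ∑ x : F, ψ (algebraMap k F a * x ^ 2 + algebraMap k F b * x) = G * e (c * a⁻¹) := by
    have hA : algebraMap k F a ≠ 0 := (FaithfulSMul.algebraMap_eq_zero_iff k F).not.2 ha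
    rw [sum_mul_sq_add_mul hF ψ hA,
      sum_mul_sq_of_isSquare ψ hA (FiniteField.isSquare_algebraMap_of_even_finrank hk hn a),
      show -algebraMap k F b ^ 2 / (4 * algebraMap k F a) = algebraMap k F (-b ^ 2 / (4 * a)) by
        simp [map_ofNat], compTrace_algebraMap, mul_comm]
    congr 2
    simp only [c]
    field_simp
  calc ∑ a : k, ∑ x : F, ψ (algebraMap k F a * x ^ 2 + algebraMap k F b * x)
      = (if b = 0 then (Fintype.card F : R) else 0) + ∑ a ∈ univ.erase 0, G * e (c * a⁻¹) := by
        rw [← add_sum_erase _ _ (mem_univ 0), linear_sum]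
        exact congrArg _ (sum_congr rfl fun a ha ↦ quadratic_sum (ne_of_mem_erase ha))
    _ = (if b = 0 then (Fintype.card F : R) else 0) + (G * ∑ a : k, e (c * a⁻¹) - G) := by
        rw [← add_sum_erase _ _ (mem_univ 0), mul_add, ← mul_sum]
        simp
    _ = _ := by
        simp only [sum_mul_inv e he, hc]
        split_ifs <;> ring

theorem card_trace_sq_eq_zero_and_trace_eq_mul (hk : ringChar k ≠ 2)
    (hn : Even (Module.finrank k F)) (hnk : (Module.finrank k F : k) ≠ 0) (he : e.IsPrimitive)
    (B : k) :
    (#{x : F | Algebra.trace k F (x ^ 2) = 0 ∧ Algebra.trace k F x = B} : R)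
        * Fintype.card k ^ 2
      = Fintype.card F + if B = 0 then 0 else Fintype.card k * ∑ x : F, e.compTrace F (x ^ 2) := by
  set G := ∑ x : F, e.compTrace F (x ^ 2)
  have phase (a b : k) (x : F) :
      e (a * Algebra.trace k F (x ^ 2)) * e (b * (Algebra.trace k F x - B))
        = e (b * -B) * e.compTrace F (algebraMap k F a * x ^ 2 + algebraMap k F b * x) := by
    rw [map_add_eq_mul, compTrace_algebraMap_mul, compTrace_algebraMap_mul, mul_sub,
      sub_eq_add_neg, map_add_eq_mul, ← mul_neg]
    ring
  have orthogonality := card_filter_eq_zero_and_eq_zero_mul he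
    (fun x : F ↦ Algebra.trace k F (x ^ 2)) (fun x ↦ Algebra.trace k F x - B)
  simp only [sub_eq_zero] at orthogonality
  rw [orthogonality]
  calc ∑ x : F, (∑ a, e (a * Algebra.trace k F (x ^ 2))) * ∑ b, e (b * (Algebra.trace k F x - B))
      = ∑ b : k, e (b * -B) * ∑ a : k, ∑ x : F,
          e.compTrace F (algebraMap k F a * x ^ 2 + algebraMap k F b * x) := by
        simp_rw [sum_mul_sum, phase, mul_sum]
        exact sum_comm.trans ((sum_congr rfl fun _ _ ↦ sum_comm).trans sum_comm)
    _ = ∑ b : k, e (b * -B) *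
          ((if b = 0 then Fintype.card F + Fintype.card k * G else 0) - G) := by
        refine sum_congr rfl fun b _ ↦ ?_
        rw [sum_sum_compTrace_mul_sq_add_mul hk hn hnk he]
    _ = Fintype.card F + Fintype.card k * G - (∑ b : k, e (b * -B)) * G := by
        simp [mul_sub, sum_sub_distrib, ← sum_mul]
    _ = _ := by
        simp only [sum_mulShift _ he, neg_eq_zero]
        split_ifs <;> push_cast <;> ring

end Trace

end AddChar

theorem stmt9_general (p m : ℕ) [Fact p.Prime] (hodd : p ≠ 2) (hme : Even m)
    (hmp : ¬ p ∣ m)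
    (F : Type) [Field F] [Fintype F] [DecidableEq F] [Algebra (ZMod p) F]
    (hcard : Fintype.card F = p ^ m)
    (ζ : ℂ) (hζ : IsPrimitiveRoot ζ p)
    (ηm : F → ℂ)
    (hηm : ∀ a : F, ηm a = if a = 0 then 0 else if IsSquare a then 1 else -1)
    (Gm : ℂ)
    (hGm : Gm = ∑ x ∈ Finset.univ.filter (fun x : F => x ≠ 0),
        ηm x * ζ ^ (Algebra.trace (ZMod p) F x).val) :
    (∀ B : ZMod p, B ≠ 0 →
      ((Finset.univ.filter (fun x : F =>
          Algebra.trace (ZMod p) F (x ^ 2) = 0 ∧ Algebra.trace (ZMod p) F x = B)).card : ℂ)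
        = (p : ℂ) ^ (m - 2) + (p : ℂ)⁻¹ * Gm) ∧
    (((Finset.univ.filter (fun x : F =>
        Algebra.trace (ZMod p) F (x ^ 2) = 0 ∧ Algebra.trace (ZMod p) F x = 0)).card : ℂ)
      = (p : ℂ) ^ (m - 2)) := by
  have hp : p.Prime := Fact.out
  have hk : ringChar (ZMod p) ≠ 2 := by rwa [ZMod.ringChar_zmod_n]
  have hn : Module.finrank (ZMod p) F = m := by
    rw [Module.card_eq_pow_finrank (K := ZMod p), ZMod.card] at hcard
    exact Nat.pow_right_injective hp.two_le hcard
  have hnk : (m : ZMod p) ≠ 0 := by rwa [Ne, ZMod.natCast_eq_zero_iff]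
  set e := AddChar.zmodChar p hζ.pow_eq_one
  have he : e.IsPrimitive := AddChar.zmodChar_primitive_of_primitive_root p hζ
  have hGm_eq : Gm = ∑ x : F, e.compTrace F (x ^ 2) := by
    rw [AddChar.sum_sq_eq_gaussSum (Algebra.ringChar_eq (ZMod p) F ▸ hk) _
      (AddChar.isPrimitive_compTrace he.ne_one).ne_one, hGm, gaussSum, sum_filter]
    refine sum_congr rfl fun x _ ↦ ?_
    simp only [hηm, MulChar.ringHomComp_apply, quadraticChar_apply, quadraticCharFun]
    split_ifs <;> simp_all [e, AddChar.zmodChar_apply]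
  have hcount := AddChar.card_trace_sq_eq_zero_and_trace_eq_mul (F := F) hk (hn ▸ hme)
    (hn ▸ hnk) he
  rw [ZMod.card] at hcount
  have hq : (Fintype.card F : ℂ) = p ^ (m - 2) * p ^ 2 := by
    obtain ⟨j, rfl⟩ := hme
    have hj : j ≠ 0 := by rintro rfl; simp at hmp
    rw [hcard, Nat.cast_pow, ← pow_add, Nat.sub_add_cancel (by omega)]
  have hp0 : (p : ℂ) ≠ 0 := by exact_mod_cast hp.ne_zero
  have hp2 : (p : ℂ) ^ 2 ≠ 0 := pow_ne_zero 2 hp0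
  refine ⟨fun B hB ↦ mul_right_cancel₀ hp2 ?_, mul_right_cancel₀ hp2 ?_⟩
  · rw [hcount B, if_neg hB, hq, ← hGm_eq]
    field_simp
  · rw [hcount 0, if_pos rfl, hq, add_zero]

/-- For `m > 2` even with `p ∤ m`: `#{x : Tr(x²)=0, Tr(x)=B} = p^{m-2} + p⁻¹G_m`
for every `B ≠ 0`, and `#{x : Tr(x²)=0, Tr(x)=0} = p^{m-2}`. -/
theorem stmt9 (p m : ℕ) [Fact p.Prime] (hodd : p ≠ 2) (hm : 2 < m) (hme : Even m)
    (hmp : ¬ p ∣ m)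
    (F : Type) [Field F] [Fintype F] [DecidableEq F] [Algebra (ZMod p) F]
    (hcard : Fintype.card F = p ^ m)
    (ζ : ℂ) (hζ : IsPrimitiveRoot ζ p)
    (ηm : F → ℂ)
    (hηm : ∀ a : F, ηm a = if a = 0 then 0 else if IsSquare a then 1 else -1)
    (Gm : ℂ)
    (hGm : Gm = ∑ x ∈ Finset.univ.filter (fun x : F => x ≠ 0),
        ηm x * ζ ^ (Algebra.trace (ZMod p) F x).val) :
    (∀ B : ZMod p, B ≠ 0 →
      ((Finset.univ.filter (fun x : F =>
          Algebra.trace (ZMod p) F (x ^ 2) = 0 ∧ Algebra.trace (ZMod p) F x = B)).card : ℂ)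
        = (p : ℂ) ^ (m - 2) + (p : ℂ)⁻¹ * Gm) ∧
    (((Finset.univ.filter (fun x : F =>
        Algebra.trace (ZMod p) F (x ^ 2) = 0 ∧ Algebra.trace (ZMod p) F x = 0)).card : ℂ)
      = (p : ℂ) ^ (m - 2)) :=
  stmt9_general p m hodd hme hmp F hcard ζ hζ ηm hηm Gm hGm
end

section
/- Let p be an odd prime, r = p^m with m odd and m_p := m mod p nonzero. For A ∈ F_p^* and B ∈ F_p, let N(A,B) = #{x ∈ F_r : Tr(x²) = A, Tr(x) = B} and Δ = B² - m_p·A. Then N(A,B) = p^{m-2} + η(-m_p)(p-1)p^{-2}·G_m·G if Δ = 0, and N(A,B) = p^{m-2} - η(-m_p)p^{-2}·G_m·G if Δ ≠ 0, where η is the quadratic character of F_p, G its Gauss sum, and G_m the quadratic Gauss sum over F_r. -/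
/-!
Detect the two trace conditions with additive characters: for a primitive character `ψ` of
`F_p`, `p² N(A,B) = ∑_{u,v} ψ(-uA - vB) S(u,v)` with `S(u,v) = ∑_{x ∈ F_r} ψ(Tr(u x² + v x))`.
The terms `u = 0` contribute `p^m`. For `u ≠ 0`, completing the square evaluates `S(u,v)` as
`η_m(u) G_m ψ(-m_p v² / 4u)`, where `η_m(u) = η(u)` because `[F_r : F_p] = m` is odd; the sum over
`v` is then again a quadratic Gauss sum over `F_p`, leaving `η(-m_p) G_m G ∑_{u ≠ 0} ψ(u Δ / m_p)`,
and this last sum is `p - 1` or `-1` according as `Δ = 0` or not.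
-/

open Finset AddChar MulChar Module

lemma odd_pow_div_two_eq {q : ℕ} (hq : Odd q) (n : ℕ) :
    q ^ n / 2 = q / 2 * ∑ i ∈ range n, q ^ i := by
  have hgeom := geom_sum_mul_of_one_le (x := q) hq.pos n
  have hpos : 1 ≤ q ^ n := Nat.one_le_pow _ _ hq.pos
  have hq2 : q - 1 = 2 * (q / 2) := by obtain ⟨k, rfl⟩ := hq; omega
  rw [hq2, mul_comm, mul_assoc] at hgeom
  omega

/-- Via Euler's criterion: `(#L - 1) / 2 = (#K - 1) / 2 * (1 + #K + ⋯ + #K ^ (d - 1))`, and the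
second factor is odd when `d = [L : K]` is odd. -/
theorem quadraticChar_algebraMap_of_odd_finrank {K L : Type*} [Field K] [Fintype K]
    [DecidableEq K] [Field L] [Fintype L] [DecidableEq L] [Algebra K L]
    (hK : ringChar K ≠ 2) (hodd : Odd (finrank K L)) (a : K) :
    quadraticChar L (algebraMap K L a) = quadraticChar K a := by
  have hL : ringChar L ≠ 2 := by rwa [← Algebra.ringChar_eq K L]
  set q := Fintype.card K
  set s := ∑ i ∈ range (finrank K L), q ^ i
  have hq : Odd q := Nat.odd_iff.mpr (FiniteField.odd_card_of_char_ne_two hK)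
  have hs : Odd s := by
    rw [odd_sum_iff_odd_card_odd, filter_true_of_mem fun i _ => hq.pow, card_range]
    exact hodd
  have hexp : Fintype.card L / 2 = q / 2 * s := by
    rw [Module.card_eq_pow_finrank (K := K), odd_pow_div_two_eq hq]
  refine (quadraticChar_isQuadratic L).eq_of_eq_coe (quadraticChar_isQuadratic K) hL ?_
  rw [quadraticChar_eq_pow_of_char_ne_two' hL, hexp, pow_mul, ← map_pow,
    ← quadraticChar_eq_pow_of_char_ne_two' hK, map_intCast, ← Int.cast_pow,
    ← pow_apply' _ hs.pos.ne', (quadraticChar_isQuadratic K).pow_odd hs]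

lemma four_ne_zero_of_ringChar_ne_two {K : Type*} [Ring K] [NoZeroDivisors K] [Nontrivial K]
    (hK : ringChar K ≠ 2) : (4 : K) ≠ 0 := by
  rw [show (4 : K) = 2 ^ 2 by norm_num]
  exact pow_ne_zero 2 (Ring.two_ne_zero hK)

section QuadraticGaussSums

variable (F R : Type*) [Field F] [Fintype F] [DecidableEq F] [CommRing R]

def quadraticCharIn : MulChar F R := (quadraticChar F).ringHomComp (Int.castRingHom R)

variable {F R}

lemma quadraticCharIn_apply (a : F) :
    quadraticCharIn F R a = if a = 0 then 0 else if IsSquare a then 1 else -1 := by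
  simp only [quadraticCharIn, ringHomComp_apply, quadraticChar_apply, quadraticCharFun]
  split_ifs <;> simp

lemma isQuadratic_quadraticCharIn : (quadraticCharIn F R).IsQuadratic :=
  (quadraticChar_isQuadratic F).comp _

lemma quadraticCharIn_sq_one {a : F} (ha : a ≠ 0) : quadraticCharIn F R (a ^ 2) = 1 := by
  simp [quadraticCharIn, quadraticChar_sq_one' ha]

variable [IsDomain R] {ψ : AddChar F R}

lemma sum_addChar_mul_sq (hF : ringChar F ≠ 2) (hψ : ψ.IsPrimitive) {a : F} (ha : a ≠ 0) :
    ∑ x, ψ (a * x ^ 2) = quadraticCharIn F R a * gaussSum (quadraticCharIn F R) ψ := by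
  have hsqrts (t : F) : (#{x : F | x ^ 2 = t} : R) = quadraticCharIn F R t + 1 := by
    have h := congrArg (Int.cast (R := R)) (quadraticChar_card_sqrts hF t)
    rw [Set.toFinset_ofPred] at h
    push_cast at h
    exact h
  calc ∑ x, ψ (a * x ^ 2) = ∑ t, ∑ x with x ^ 2 = t, ψ (a * x ^ 2) :=
        (sum_fiberwise _ _ _).symm
    _ = ∑ t, (quadraticCharIn F R t + 1) * ψ (a * t) := by
        refine sum_congr rfl fun t _ => ?_
        rw [← hsqrts, ← nsmul_eq_mul, ← sum_const]
        exact sum_congr rfl fun x hx => by rw [(mem_filter.mp hx).2]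
    _ = gaussSum (quadraticCharIn F R) (ψ.mulShift a) := by
        have hzero : ∑ t, ψ (a * t) = 0 := by simpa [mul_comm, ha] using sum_mulShift a hψ
        simp only [add_mul, one_mul, sum_add_distrib, hzero, add_zero, gaussSum, mulShift_apply]
    _ = quadraticCharIn F R a * gaussSum (quadraticCharIn F R) ψ := by
        rw [← Units.val_mk0 ha, gaussSum_mulShift_eq, isQuadratic_quadraticCharIn.inv]

lemma sum_addChar_mul_sq_add_mul (hF : ringChar F ≠ 2) (hψ : ψ.IsPrimitive) {a : F}
    (ha : a ≠ 0) (b : F) :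
    ∑ x, ψ (a * x ^ 2 + b * x) =
      quadraticCharIn F R a * gaussSum (quadraticCharIn F R) ψ * ψ (-(b ^ 2 / (4 * a))) := by
  have h2 : (2 : F) ≠ 0 := Ring.two_ne_zero hF
  have h4 : (4 : F) ≠ 0 := four_ne_zero_of_ringChar_ne_two hF
  have hsq (x : F) : a * x ^ 2 + b * x = a * (x + b / (2 * a)) ^ 2 + -(b ^ 2 / (4 * a)) := by
    field_simp
    ring
  simp_rw [hsq, map_add_eq_mul, ← sum_mul]
  rw [Fintype.sum_equiv (Equiv.addRight (b / (2 * a)))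
    (fun x => ψ (a * (x + b / (2 * a)) ^ 2)) (fun y => ψ (a * y ^ 2)) fun _ => rfl,
    sum_addChar_mul_sq hF hψ ha]

end QuadraticGaussSums

lemma gaussSum_eq_sum_filter_ne_zero {F R : Type*} [Field F] [Fintype F] [CommRing R]
    [DecidablePred fun x : F => x ≠ 0] (χ : MulChar F R) (ψ : AddChar F R) :
    gaussSum χ ψ = ∑ x ∈ univ.filter (fun x : F => x ≠ 0), χ x * ψ x :=
  (sum_filter_of_ne fun x _ hx => by rintro rfl; simp at hx).symm

section Orthogonality

variable {K R : Type*} [CommRing K] [Fintype K] [DecidableEq K] [CommRing R] [IsDomain R]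
  {ψ : AddChar K R}

lemma sum_compl_zero_addChar_mul (hψ : ψ.IsPrimitive) (c : K) :
    ∑ u ∈ {0}ᶜ, ψ (u * c) = (if c = 0 then (Fintype.card K : R) else 0) - 1 := by
  have h := sum_mulShift c hψ
  rw [Fintype.sum_eq_add_sum_compl 0, zero_mul, map_zero_eq_one, Nat.cast_ite,
    Nat.cast_zero] at h
  rw [← h, add_sub_cancel_left]

lemma card_filter_eq_and_eq_mul_card_sq {α : Type*} [Fintype α] (hψ : ψ.IsPrimitive)
    (f g : α → K) (A B : K) :
    (#{x | f x = A ∧ g x = B} : R) * Fintype.card K ^ 2 =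
      ∑ u, ∑ v, ψ (-(u * A)) * ψ (-(v * B)) * ∑ x, ψ (u * f x + v * g x) := by
  have hdetect (x : α) : (∑ u, ψ (u * (f x - A))) * ∑ v, ψ (v * (g x - B)) =
      if f x = A ∧ g x = B then (Fintype.card K : R) ^ 2 else 0 := by
    rw [sum_mulShift _ hψ, sum_mulShift _ hψ]
    by_cases hf : f x = A <;> by_cases hg : g x = B <;> simp [hf, hg, sub_eq_zero, sq]
  calc (#{x | f x = A ∧ g x = B} : R) * Fintype.card K ^ 2
      = ∑ x, (∑ u, ψ (u * (f x - A))) * ∑ v, ψ (v * (g x - B)) := by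
        simp_rw [hdetect, ← sum_filter, sum_const, nsmul_eq_mul]
    _ = ∑ u, ∑ v, ψ (-(u * A)) * ψ (-(v * B)) * ∑ x, ψ (u * f x + v * g x) := by
        simp_rw [sum_mul_sum, mul_sum]
        rw [sum_comm]
        refine sum_congr rfl fun u _ => ?_
        rw [sum_comm]
        refine sum_congr rfl fun v _ => sum_congr rfl fun x _ => ?_
        rw [← map_add_eq_mul, ← map_add_eq_mul, ← map_add_eq_mul]
        congr 1
        ring

end Orthogonality

noncomputable def AddChar.compTrace_s13 {K : Type*} (L : Type*) {M : Type*} [CommRing K]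
    [CommRing L] [Algebra K L] [CommMonoid M] (ψ : AddChar K M) : AddChar L M :=
  ψ.compAddMonoidHom (Algebra.trace K L).toAddMonoidHom

lemma AddChar.compTrace_apply_s13 {K L M : Type*} [CommRing K] [CommRing L] [Algebra K L]
    [CommMonoid M] (ψ : AddChar K M) (x : L) :
    ψ.compTrace_s13 L x = ψ (Algebra.trace K L x) := rfl

lemma AddChar.IsPrimitive.compTrace_s13 {K L M : Type*} [Field K] [Finite K] [Field L] [Finite L]
    [Algebra K L] [CommMonoid M] {ψ : AddChar K M} (hψ : ψ.IsPrimitive) :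
    (ψ.compTrace_s13 L).IsPrimitive := by
  refine IsPrimitive.of_ne_one fun h => hψ one_ne_zero ?_
  obtain ⟨x, hx⟩ := Algebra.trace_surjective K L 1
  ext c
  rw [mulShift_one, one_apply, ← mul_one c, ← hx, ← smul_eq_mul, ← map_smul,
    ← compTrace_apply_s13, h, one_apply]

section TraceQuadraticForms

variable {K L R : Type*} [Field K] [Fintype K] [DecidableEq K] [Field L] [Fintype L]
  [Algebra K L] [CommRing R] [IsDomain R] {ψ : AddChar K R}

lemma sum_addChar_mul_trace (hψ : ψ.IsPrimitive) (v : K) :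
    ∑ x : L, ψ (v * Algebra.trace K L x) =
      if v = 0 then (Fintype.card K : R) ^ finrank K L else 0 := by
  classical
  have h := sum_mulShift (algebraMap K L v) hψ.compTrace_s13
  simp only [compTrace_apply_s13, mul_comm _ (algebraMap K L v), ← Algebra.smul_def, map_smul,
    smul_eq_mul, map_eq_zero_iff _ (algebraMap K L).injective,
    Module.card_eq_pow_finrank (K := K) (V := L)] at h
  rw [h]
  push_cast
  rfl

variable [DecidableEq L]

lemma sum_addChar_mul_trace_sq_add_mul_trace_of_ne_zero (hK : ringChar K ≠ 2)
    (hodd : Odd (finrank K L)) (hψ : ψ.IsPrimitive) {u : K} (hu : u ≠ 0) (v : K) :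
    ∑ x : L, ψ (u * Algebra.trace K L (x ^ 2) + v * Algebra.trace K L x) =
      quadraticCharIn K R u * gaussSum (quadraticCharIn L R) (ψ.compTrace_s13 L) *
        ψ (-((finrank K L : K) * (v ^ 2 / (4 * u)))) := by
  have hL : ringChar L ≠ 2 := by rwa [← Algebra.ringChar_eq K L]
  have huL : algebraMap K L u ≠ 0 := (map_ne_zero_iff _ (algebraMap K L).injective).mpr hu
  have hlin (x : L) : u * Algebra.trace K L (x ^ 2) + v * Algebra.trace K L x =
      Algebra.trace K L (algebraMap K L u * x ^ 2 + algebraMap K L v * x) := by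
    simp only [map_add, ← Algebra.smul_def, map_smul, smul_eq_mul]
  have hχ : quadraticCharIn L R (algebraMap K L u) = quadraticCharIn K R u := by
    simp only [quadraticCharIn, ringHomComp_apply, quadraticChar_algebraMap_of_odd_finrank hK hodd]
  have hconst : -(algebraMap K L v ^ 2 / (4 * algebraMap K L u)) =
      algebraMap K L (-(v ^ 2 / (4 * u))) := by
    simp only [map_neg, map_div₀, map_pow, map_mul, map_ofNat]
  simp_rw [hlin, ← compTrace_apply_s13]
  rw [sum_addChar_mul_sq_add_mul hL hψ.compTrace_s13 huL, compTrace_apply_s13, hχ, hconst,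
    Algebra.trace_algebraMap, nsmul_eq_mul, mul_neg]

lemma sum_addChar_mul_sum_addChar_trace_of_ne_zero (hK : ringChar K ≠ 2)
    (hodd : Odd (finrank K L)) (hm : (finrank K L : K) ≠ 0) (hψ : ψ.IsPrimitive) {u : K}
    (hu : u ≠ 0) (A B : K) :
    ∑ v, ψ (-(u * A)) * ψ (-(v * B)) *
        ∑ x : L, ψ (u * Algebra.trace K L (x ^ 2) + v * Algebra.trace K L x) =
      quadraticCharIn K R (-(finrank K L : K)) *
        gaussSum (quadraticCharIn L R) (ψ.compTrace_s13 L) * gaussSum (quadraticCharIn K R) ψ *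
        ψ (u * ((B ^ 2 - finrank K L * A) / finrank K L)) := by
  set m : K := (finrank K L : K)
  set χ := quadraticCharIn K R
  set gL := gaussSum (quadraticCharIn L R) (ψ.compTrace_s13 L)
  have h2 : (2 : K) ≠ 0 := Ring.two_ne_zero hK
  have h4 : (4 : K) ≠ 0 := four_ne_zero_of_ringChar_ne_two hK
  have ha : -(m / (4 * u)) ≠ 0 := neg_ne_zero.mpr (div_ne_zero hm (mul_ne_zero h4 hu))
  have hχa : χ (-(m / (4 * u))) = χ (-m) * χ u := by
    rw [show -(m / (4 * u)) = -m * u * ((2 * u)⁻¹) ^ 2 by field_simp; ring, map_mul,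
      quadraticCharIn_sq_one (inv_ne_zero (mul_ne_zero h2 hu)), mul_one, map_mul]
  have hχu : χ u * χ u = 1 := by rw [← map_mul, ← sq, quadraticCharIn_sq_one hu]
  have hψu : ψ (-(u * A)) * ψ (-((-B) ^ 2 / (4 * -(m / (4 * u))))) =
      ψ (u * ((B ^ 2 - m * A) / m)) := by
    rw [← map_add_eq_mul]
    congr 1
    field_simp
    ring
  calc ∑ v, ψ (-(u * A)) * ψ (-(v * B)) *
        ∑ x : L, ψ (u * Algebra.trace K L (x ^ 2) + v * Algebra.trace K L x)
      = χ u * gL * ψ (-(u * A)) * ∑ v, ψ (-(m / (4 * u)) * v ^ 2 + -B * v) := by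
        rw [mul_sum]
        refine sum_congr rfl fun v _ => ?_
        rw [sum_addChar_mul_trace_sq_add_mul_trace_of_ne_zero hK hodd hψ hu v,
          show -(m / (4 * u)) * v ^ 2 + -B * v = -(v * B) + -(m * (v ^ 2 / (4 * u))) by ring,
          map_add_eq_mul]
        ring
    _ = χ (-m) * gL * gaussSum χ ψ * ψ (u * ((B ^ 2 - m * A) / m)) := by
        rw [sum_addChar_mul_sq_add_mul hK hψ ha, hχa, ← hψu]
        linear_combination (χ (-m) * gL * gaussSum χ ψ * ψ (-(u * A)) *
          ψ (-((-B) ^ 2 / (4 * -(m / (4 * u)))))) * hχu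

theorem card_trace_sq_eq_and_trace_eq_mul_card_sq (hK : ringChar K ≠ 2)
    (hodd : Odd (finrank K L)) (hm : (finrank K L : K) ≠ 0) (hψ : ψ.IsPrimitive) (A B : K) :
    (#{x : L | Algebra.trace K L (x ^ 2) = A ∧ Algebra.trace K L x = B} : R) *
        Fintype.card K ^ 2 =
      Fintype.card K ^ finrank K L + quadraticCharIn K R (-(finrank K L : K)) *
        gaussSum (quadraticCharIn L R) (ψ.compTrace_s13 L) * gaussSum (quadraticCharIn K R) ψ *
        ((if B ^ 2 - finrank K L * A = 0 then (Fintype.card K : R) else 0) - 1) := by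
  have hzero : ∑ v, ψ (-(0 * A)) * ψ (-(v * B)) *
      ∑ x : L, ψ (0 * Algebra.trace K L (x ^ 2) + v * Algebra.trace K L x) =
        Fintype.card K ^ finrank K L := by
    simp only [zero_mul, neg_zero, map_zero_eq_one, one_mul, zero_add, sum_addChar_mul_trace hψ,
      mul_ite, mul_zero, sum_ite_eq', mem_univ, if_true]
  rw [card_filter_eq_and_eq_mul_card_sq hψ (fun x : L => Algebra.trace K L (x ^ 2))
      (Algebra.trace K L) A B, Fintype.sum_eq_add_sum_compl 0, hzero,
    sum_congr rfl fun u hu =>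
      sum_addChar_mul_sum_addChar_trace_of_ne_zero hK hodd hm hψ (by simpa using hu) A B,
    ← mul_sum, sum_compl_zero_addChar_mul hψ]
  simp only [div_eq_zero_iff, hm, or_false]

end TraceQuadraticForms

theorem stmt13_general (p m : ℕ) [Fact p.Prime] (hodd : p ≠ 2) (hm : 2 < m) (hmo : Odd m)
    (hmp : ¬ p ∣ m)
    (F : Type) [Field F] [Fintype F] [DecidableEq F] [Algebra (ZMod p) F]
    (hcard : Fintype.card F = p ^ m)
    (ζ : ℂ) (hζ : IsPrimitiveRoot ζ p)
    (ηm : F → ℂ)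
    (hηm : ∀ a : F, ηm a = if a = 0 then 0 else if IsSquare a then 1 else -1)
    (η : ZMod p → ℂ)
    (hη : ∀ a : ZMod p, η a = if a = 0 then 0 else if IsSquare a then 1 else -1)
    (Gm : ℂ)
    (hGm : Gm = ∑ x ∈ Finset.univ.filter (fun x : F => x ≠ 0),
        ηm x * ζ ^ (Algebra.trace (ZMod p) F x).val)
    (G : ℂ)
    (hG : G = ∑ x ∈ Finset.univ.filter (fun x : ZMod p => x ≠ 0), η x * ζ ^ x.val)
    (A B : ZMod p) :
    (B ^ 2 - (m : ZMod p) * A = 0 →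
      ((Finset.univ.filter (fun x : F =>
          Algebra.trace (ZMod p) F (x ^ 2) = A ∧ Algebra.trace (ZMod p) F x = B)).card : ℂ)
        = (p : ℂ) ^ (m - 2)
            + η (-(m : ZMod p)) * ((p : ℂ) - 1) * ((p : ℂ) ^ 2)⁻¹ * Gm * G) ∧
    (B ^ 2 - (m : ZMod p) * A ≠ 0 →
      ((Finset.univ.filter (fun x : F =>
          Algebra.trace (ZMod p) F (x ^ 2) = A ∧ Algebra.trace (ZMod p) F x = B)).card : ℂ)
        = (p : ℂ) ^ (m - 2)
            - η (-(m : ZMod p)) * ((p : ℂ) ^ 2)⁻¹ * Gm * G) := by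
  have hp : p.Prime := Fact.out
  have : NeZero p := ⟨hp.ne_zero⟩
  have hfinrank : finrank (ZMod p) F = m := by
    have h := Module.card_eq_pow_finrank (K := ZMod p) (V := F)
    rw [ZMod.card, hcard] at h
    exact (Nat.pow_right_injective hp.two_le h).symm
  have hK : ringChar (ZMod p) ≠ 2 := by rwa [ZMod.ringChar_zmod_n]
  have hm0 : (m : ZMod p) ≠ 0 := by rwa [Ne, ZMod.natCast_eq_zero_iff]
  obtain rfl : η = quadraticCharIn (ZMod p) ℂ := funext fun a => by rw [hη, quadraticCharIn_apply]
  obtain rfl : ηm = quadraticCharIn F ℂ := funext fun a => by rw [hηm, quadraticCharIn_apply]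
  have hG' : G = gaussSum (quadraticCharIn (ZMod p) ℂ) (zmodChar p hζ.pow_eq_one) := by
    rw [hG, gaussSum_eq_sum_filter_ne_zero]
    rfl
  have hGm' : Gm = gaussSum (quadraticCharIn F ℂ) ((zmodChar p hζ.pow_eq_one).compTrace_s13 F) := by
    rw [hGm, gaussSum_eq_sum_filter_ne_zero]
    rfl
  have key := card_trace_sq_eq_and_trace_eq_mul_card_sq (L := F) hK (hfinrank ▸ hmo)
    (hfinrank ▸ hm0) (zmodChar_primitive_of_primitive_root p hζ) A B
  rw [hfinrank, ZMod.card, ← hG', ← hGm'] at key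
  have hpm : (p : ℂ) ^ m = (p : ℂ) ^ (m - 2) * p ^ 2 := by rw [← pow_add, Nat.sub_add_cancel hm.le]
  have hp0 : (p : ℂ) ≠ 0 := Nat.cast_ne_zero.mpr hp.ne_zero
  constructor <;> intro hΔ <;> simp only [hΔ, if_true, if_false] at key <;> field_simp <;>
    linear_combination key + hpm

/-- For `m` odd with `p ∤ m`, `A ∈ F_p^*`, `B ∈ F_p`, `Δ = B² - m_p·A`:
`N(A,B) = p^{m-2} + η(-m_p)(p-1)p⁻²G_mG` if `Δ = 0`, and
`N(A,B) = p^{m-2} - η(-m_p)p⁻²G_mG` if `Δ ≠ 0`. -/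
theorem stmt13 (p m : ℕ) [Fact p.Prime] (hodd : p ≠ 2) (hm : 2 < m) (hmo : Odd m)
    (hmp : ¬ p ∣ m)
    (F : Type) [Field F] [Fintype F] [DecidableEq F] [Algebra (ZMod p) F]
    (hcard : Fintype.card F = p ^ m)
    (ζ : ℂ) (hζ : IsPrimitiveRoot ζ p)
    (ηm : F → ℂ)
    (hηm : ∀ a : F, ηm a = if a = 0 then 0 else if IsSquare a then 1 else -1)
    (η : ZMod p → ℂ)
    (hη : ∀ a : ZMod p, η a = if a = 0 then 0 else if IsSquare a then 1 else -1)
    (Gm : ℂ)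
    (hGm : Gm = ∑ x ∈ Finset.univ.filter (fun x : F => x ≠ 0),
        ηm x * ζ ^ (Algebra.trace (ZMod p) F x).val)
    (G : ℂ)
    (hG : G = ∑ x ∈ Finset.univ.filter (fun x : ZMod p => x ≠ 0), η x * ζ ^ x.val)
    (A B : ZMod p) (hA : A ≠ 0) :
    (B ^ 2 - (m : ZMod p) * A = 0 →
      ((Finset.univ.filter (fun x : F =>
          Algebra.trace (ZMod p) F (x ^ 2) = A ∧ Algebra.trace (ZMod p) F x = B)).card : ℂ)
        = (p : ℂ) ^ (m - 2)
            + η (-(m : ZMod p)) * ((p : ℂ) - 1) * ((p : ℂ) ^ 2)⁻¹ * Gm * G) ∧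
    (B ^ 2 - (m : ZMod p) * A ≠ 0 →
      ((Finset.univ.filter (fun x : F =>
          Algebra.trace (ZMod p) F (x ^ 2) = A ∧ Algebra.trace (ZMod p) F x = B)).card : ℂ)
        = (p : ℂ) ^ (m - 2)
            - η (-(m : ZMod p)) * ((p : ℂ) ^ 2)⁻¹ * Gm * G) :=
  stmt13_general p m hodd hm hmo hmp F hcard ζ hζ ηm hηm η hη Gm hGm G hG A B
end
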